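/- Let M₀ be an admissible lattice in N₀ with M₀ ≠ τ(M₀) such that both M₀ + τ(M₀) and M₀ ∩ τ(M₀) are τ-stable. Let T₀ be a lattice with M₀ ⊂¹ T₀ ⊂¹ M₀^∨. Then the following are equivalent: (a) τ(M₀) ⊆ T₀; (b) M₀ ⊆ τ(T₀^∨); (c) T₀ = M₀ + τ(M₀). -/

import Mathlib

/-!
Since `M₀` is a lattice and the form is nondegenerate, `M₀^∨∨ = M₀`, and `τ` commutes with
taking duals. Hence `Λ = M₀^∨` is not `τ`-stable, for otherwise `τ(M₀) = τ(Λ^∨) = Λ^∨ = M₀`.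
In particular `L = M₀ + τ(M₀)` is a `τ`-stable lattice strictly between `M₀` and `Λ`, so
`M₀ ⊂¹ L ⊂¹ Λ`. Condition (b) says `τ(T₀) ⊆ Λ`. If moreover `T₀ ≠ L`, then `T₀ + L = Λ` and,
`τ(T₀)` and `L` being distinct covers of `τ(M₀)`, also `τ(T₀) + L = Λ`; but then
`τ(Λ) = τ(T₀) + L = Λ`, which is impossible.
-/

noncomputable section

namespace QURZ

variable {W₀ : Type*} [CommRing W₀]

/-- The length of `B / A`: the Krull dimension of the interval `[A, B]`
in the lattice of submodules. -/
noncomputable def relLength {M : Type*} [AddCommGroup M] [Module W₀ M]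
    (A B : Submodule W₀ M) : WithBot ℕ∞ :=
  Order.krullDim (Set.Icc A B)

/-- `SubIdx A B d` means `A ⊆ B` and the quotient `B/A` has length `d`
(written `A ⊂^d B` in the paper). -/
def SubIdx {M : Type*} [AddCommGroup M] [Module W₀ M]
    (A B : Submodule W₀ M) (d : ℕ) : Prop :=
  A ≤ B ∧ relLength A B = ((d : ℕ∞) : WithBot ℕ∞)

/-- The image `c • A` of a submodule `A` under scalar multiplication by `c`. -/
def smulLat {M : Type*} [AddCommGroup M] [Module W₀ M] (c : W₀) (A : Submodule W₀ M) :
    Submodule W₀ M where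
  carrier := {x | ∃ m ∈ A, c • m = x}
  zero_mem' := ⟨0, A.zero_mem, smul_zero c⟩
  add_mem' := by
    rintro a b ⟨m, hm, rfl⟩ ⟨n, hn, rfl⟩
    exact ⟨m + n, A.add_mem hm hn, smul_add c m n⟩
  smul_mem' := by
    rintro d x ⟨m, hm, rfl⟩
    exact ⟨d • m, A.smul_mem d hm, by rw [smul_smul, smul_smul, mul_comm]⟩

/-- The image of a submodule under a `σ₀`-semilinear map, where `σ₀` is a ring
automorphism. -/
def mapLat {M M' : Type*} [AddCommGroup M] [Module W₀ M] [AddCommGroup M'] [Module W₀ M']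
    {σ₀ : W₀ ≃+* W₀} (g : M →ₛₗ[(σ₀ : W₀ →+* W₀)] M') (A : Submodule W₀ M) :
    Submodule W₀ M' where
  carrier := g '' A
  zero_mem' := ⟨0, A.zero_mem, map_zero g⟩
  add_mem' := by
    rintro a b ⟨m, hm, rfl⟩ ⟨n, hn, rfl⟩
    exact ⟨m + n, A.add_mem hm hn, map_add g m n⟩
  smul_mem' := by
    rintro c x ⟨m, hm, rfl⟩
    refine ⟨σ₀.symm c • m, A.smul_mem _ hm, ?_⟩
    rw [map_smulₛₗ]
    simp

variable {K₀ : Type*} [Field K₀] [Algebra W₀ K₀]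
variable {N₀ : Type*} [AddCommGroup N₀] [Module K₀ N₀] [Module W₀ N₀] [IsScalarTower W₀ K₀ N₀]

/-- A lattice: a finitely generated `W₀`-submodule spanning the ambient space over `K₀`. -/
def IsLattice (A : Submodule W₀ N₀) : Prop :=
  A.FG ∧ Submodule.span K₀ (A : Set N₀) = ⊤

/-- The dual lattice with respect to a bilinear form, consisting of the vectors
pairing into `W₀` with all elements of `A`. -/
def dualLat (form : N₀ →ₗ[K₀] N₀ →ₗ[K₀] K₀) (A : Submodule W₀ N₀) : Submodule W₀ N₀ where
  carrier := {x | ∀ y ∈ A, form x y ∈ (algebraMap W₀ K₀).range}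
  zero_mem' := fun y _ => by rw [map_zero, LinearMap.zero_apply]; exact zero_mem _
  add_mem' := by
    intro a b ha hb y hy
    rw [map_add, LinearMap.add_apply]
    exact add_mem (ha y hy) (hb y hy)
  smul_mem' := by
    intro c x hx y hy
    rw [← IsScalarTower.algebraMap_smul K₀ c x, map_smul, LinearMap.smul_apply, smul_eq_mul]
    exact mul_mem (RingHom.mem_range_self _ c) (hx y hy)

/-- An admissible lattice: `p M₀^∨ ⊆ M₀ ⊂² M₀^∨` and `p τ(M₀^∨) ⊆ M₀ ⊂² τ(M₀^∨)`.
These are the `𝔽`-points of the reduced quaternionic unitary Rapoport–Zink space `ℳ`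
with paramodular level. -/
def IsAdmissible (p : ℕ) (form : N₀ →ₗ[K₀] N₀ →ₗ[K₀] K₀)
    {σ₀ : W₀ ≃+* W₀} (τ : N₀ →ₛₗ[(σ₀ : W₀ →+* W₀)] N₀) (M₀ : Submodule W₀ N₀) : Prop :=
  IsLattice (K₀ := K₀) M₀ ∧
  smulLat (p : W₀) (dualLat form M₀) ≤ M₀ ∧
  SubIdx M₀ (dualLat form M₀) 2 ∧
  smulLat (p : W₀) (mapLat τ (dualLat form M₀)) ≤ M₀ ∧
  SubIdx M₀ (mapLat τ (dualLat form M₀)) 2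

/-- A web pair `(S₀, T₀)` for an admissible lattice `M₀`:
`pM₀^∨ ⊂¹ S₀ ⊂¹ M₀ ⊂¹ T₀ ⊂¹ M₀^∨`, `pτ(T₀^∨) ⊆ S₀ ⊆ τ(T₀^∨)` and
`pτ(S₀^∨) ⊆ T₀ ⊆ τ(S₀^∨)`.  Web pairs for `M₀` are the points of the fiber over `M₀`
of the projection from Iwahori level `ℳ_Iw(𝔽)` to `ℳ(𝔽)`. -/
def IsWebPair (p : ℕ) (form : N₀ →ₗ[K₀] N₀ →ₗ[K₀] K₀)
    {σ₀ : W₀ ≃+* W₀} (τ : N₀ →ₛₗ[(σ₀ : W₀ →+* W₀)] N₀)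
    (M₀ S₀ T₀ : Submodule W₀ N₀) : Prop :=
  IsLattice (K₀ := K₀) S₀ ∧ IsLattice (K₀ := K₀) T₀ ∧
  SubIdx (smulLat (p : W₀) (dualLat form M₀)) S₀ 1 ∧
  SubIdx S₀ M₀ 1 ∧ SubIdx M₀ T₀ 1 ∧ SubIdx T₀ (dualLat form M₀) 1 ∧
  smulLat (p : W₀) (mapLat τ (dualLat form T₀)) ≤ S₀ ∧
  S₀ ≤ mapLat τ (dualLat form T₀) ∧
  smulLat (p : W₀) (mapLat τ (dualLat form S₀)) ≤ T₀ ∧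
  T₀ ≤ mapLat τ (dualLat form S₀)


section KrullDim

variable {α : Type*} [PartialOrder α]

lemma covBy_of_krullDim_Icc_eq_one {a b : α} (h : Order.krullDim (Set.Icc a b) = 1) :
    a ⋖ b := by
  obtain ⟨x, y, hxy⟩ := Order.one_le_krullDim_iff.mp h.ge
  refine ⟨x.2.1.trans_lt ((Subtype.coe_lt_coe.mpr hxy).trans_le y.2.2), fun c hac hcb => ?_⟩
  have hab := (hac.trans hcb).le
  obtain hmin | hmax := Order.krullDim_le_one_iff.mp h.le ⟨c, hac.le, hcb.le⟩
  · exact hmin.not_lt (show (⟨a, le_rfl, hab⟩ : Set.Icc a b) < ⟨c, hac.le, hcb.le⟩ from hac)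
  · exact hmax.not_lt (show (⟨c, hac.le, hcb.le⟩ : Set.Icc a b) < ⟨b, hab, le_rfl⟩ from hcb)

lemma three_le_krullDim_of_lt_of_lt_of_lt {a b c d : α} (hab : a < b) (hbc : b < c)
    (hcd : c < d) : 3 ≤ Order.krullDim α := by
  let s : LTSeries α := ⟨3, ![a, b, c, d], fun i => by fin_cases i <;> simpa⟩
  exact Order.LTSeries.length_le_krullDim s

lemma covBy_and_covBy_of_krullDim_Icc_le_two {a b c : α} (h : Order.krullDim (Set.Icc a c) ≤ 2)
    (hab : a < b) (hbc : b < c) : a ⋖ b ∧ b ⋖ c := by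
  have hac := hab.trans hbc
  refine ⟨⟨hab, fun x hax hxb => ?_⟩, ⟨hbc, fun x hbx hxc => ?_⟩⟩
  · have := three_le_krullDim_of_lt_of_lt_of_lt (α := Set.Icc a c) (a := ⟨a, le_rfl, hac.le⟩)
      (b := ⟨x, hax.le, (hxb.trans hbc).le⟩) (c := ⟨b, hab.le, hbc.le⟩) (d := ⟨c, hac.le, le_rfl⟩)
      hax hxb hbc
    exact absurd (this.trans h) (by norm_num)
  · have := three_le_krullDim_of_lt_of_lt_of_lt (α := Set.Icc a c) (a := ⟨a, le_rfl, hac.le⟩)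
      (b := ⟨b, hab.le, hbc.le⟩) (c := ⟨x, (hab.trans hbx).le, hxc.le⟩) (d := ⟨c, hac.le, le_rfl⟩)
      hab hbx hxc
    exact absurd (this.trans h) (by norm_num)

lemma SubIdx.covBy {M : Type*} [AddCommGroup M] [Module W₀ M] {A B : Submodule W₀ M}
    (h : SubIdx A B 1) : A ⋖ B :=
  covBy_of_krullDim_Icc_eq_one h.2

lemma SubIdx.covBy_and_covBy_of_lt_of_lt {M : Type*} [AddCommGroup M] [Module W₀ M]
    {A B C : Submodule W₀ M} (h : SubIdx A C 2) (hAB : A < B) (hBC : B < C) : A ⋖ B ∧ B ⋖ C :=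
  covBy_and_covBy_of_krullDim_Icc_le_two h.2.le hAB hBC

end KrullDim

section CovBy

variable {α : Type*} [Lattice α]

lemma sup_eq_of_covBy_of_lt {a b c d : α} (hab : a ⋖ b) (hac : a < c) (hbd : b ⋖ d) (hcd : c ≤ d)
    (hbc : b ≠ c) : b ⊔ c = d := by
  have hcb : ¬ c ≤ b := fun h => (hab.eq_or_eq hac.le h).elim (hac.ne' ·) (hbc.symm ·)
  exact (hbd.eq_or_eq le_sup_left (sup_le hbd.le hcd)).resolve_left
    (fun h => hcb (h ▸ le_sup_right))

lemma lt_sup_apply_of_apply_sup_eq {f : α → α} {a : α} (hne : a ≠ f a)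
    (hf : f (a ⊔ f a) = a ⊔ f a) : a < a ⊔ f a := by
  refine lt_of_le_of_ne le_sup_left fun h => hne ?_
  calc a = a ⊔ f a := h
    _ = f (a ⊔ f a) := hf.symm
    _ = f a := by rw [← h]

theorem _root_.OrderIso.eq_of_covBy_of_apply_le (f : α ≃o α) {a b c d : α} (hab : a ⋖ b)
    (hac : a ⋖ c) (hbd : b ⋖ d) (hcd : c ⋖ d) (hfc : f c = c) (hfb : f b ≤ d) (hfd : f d ≠ d) :
    b = c := by
  by_contra hbc
  have hfac : f a ⋖ c := hfc ▸ (apply_covBy_apply_iff f).mpr hac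
  have hfab : f a ⋖ f b := (apply_covBy_apply_iff f).mpr hab
  have hcfb : c ≠ f b := fun h => hbc (f.injective (h ▸ hfc)).symm
  have h1 : c ⊔ f b = d := sup_eq_of_covBy_of_lt hfac hfab.lt hcd hfb hcfb
  have h2 : b ⊔ c = d := sup_eq_of_covBy_of_lt hab hac.lt hbd hcd.le hbc
  exact hfd (by rw [← h2, f.map_sup, hfc, sup_comm, h1, h2])

end CovBy

section Duality

variable (form : N₀ →ₗ[K₀] N₀ →ₗ[K₀] K₀)

lemma dualLat_eq_dualSubmodule (A : Submodule W₀ N₀) :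
    dualLat form A = LinearMap.BilinForm.dualSubmodule form A := by
  ext x
  simp only [LinearMap.BilinForm.mem_dualSubmodule, Submodule.mem_one]
  rfl

variable {form}

lemma dualLat_eq_flip_dualSubmodule (halt : LinearMap.IsAlt form) (A : Submodule W₀ N₀) :
    dualLat form A = (LinearMap.BilinForm.flip form).dualSubmodule A := by
  ext x
  simp only [LinearMap.BilinForm.mem_dualSubmodule, Submodule.mem_one,
    LinearMap.BilinForm.flip_apply, ← halt.neg x]
  exact forall₂_congr fun y _ => (neg_mem_iff (H := (algebraMap W₀ K₀).range)).symm

lemma le_dualLat_comm (halt : LinearMap.IsAlt form) {A B : Submodule W₀ N₀} :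
    A ≤ dualLat form B ↔ B ≤ dualLat form A := by
  rw [dualLat_eq_flip_dualSubmodule halt B, dualLat_eq_dualSubmodule,
    LinearMap.BilinForm.le_flip_dualSubmodule]

theorem dualLat_dualLat [IsDomain W₀] [IsPrincipalIdealRing W₀] [IsFractionRing W₀ K₀]
    (halt : LinearMap.IsAlt form) (hnondeg : LinearMap.SeparatingLeft form)
    {M : Submodule W₀ N₀} (hM : IsLattice (K₀ := K₀) M) :
    dualLat form (dualLat form M) = M := by
  have : Submodule.IsLattice K₀ M := ⟨hM.1, hM.2⟩
  let b := Module.Free.chooseBasis W₀ M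
  have hb : Submodule.span W₀ (Set.range (b.extendOfIsLattice K₀)) = M := by
    have : Set.range (b.extendOfIsLattice K₀) = M.subtype '' Set.range b := by
      rw [← Set.range_comp]; ext; simp
    rw [this, ← Submodule.map_span, b.span_eq, Submodule.map_subtype_top]
  rw [← hb, dualLat_eq_flip_dualSubmodule halt, dualLat_eq_dualSubmodule]
  exact LinearMap.BilinForm.dualSubmodule_flip_dualSubmodule_of_basis form
    (halt.isRefl.nondegenerate_iff_separatingLeft.mpr hnondeg) _

end Duality

section Frobenius

variable {σ : K₀ ≃+* K₀} {σ₀ : W₀ ≃+* W₀}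

lemma map_mem_range_algebraMap_iff
    (hσ : ∀ c : W₀, algebraMap W₀ K₀ (σ₀ c) = σ (algebraMap W₀ K₀ c)) {t : K₀} :
    σ t ∈ (algebraMap W₀ K₀).range ↔ t ∈ (algebraMap W₀ K₀).range := by
  constructor
  · rintro ⟨c, hc⟩
    exact ⟨σ₀.symm c, σ.injective (by rw [← hσ, RingEquiv.apply_symm_apply, hc])⟩
  · rintro ⟨c, rfl⟩
    exact ⟨σ₀ c, hσ c⟩

variable {form : N₀ →ₗ[K₀] N₀ →ₗ[K₀] K₀} {τ : N₀ →ₛₗ[(σ₀ : W₀ →+* W₀)] N₀}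

lemma dualLat_mapLat (hσ : ∀ c : W₀, algebraMap W₀ K₀ (σ₀ c) = σ (algebraMap W₀ K₀ c))
    (hτ : Function.Surjective τ) (hτ_form : ∀ x y, form (τ x) (τ y) = σ (form x y))
    (A : Submodule W₀ N₀) : dualLat form (mapLat τ A) = mapLat τ (dualLat form A) := by
  apply le_antisymm
  · intro x hx
    obtain ⟨w, rfl⟩ := hτ x
    refine ⟨w, fun u hu => ?_, rfl⟩
    have := hx (τ u) ⟨u, hu, rfl⟩
    rwa [hτ_form, map_mem_range_algebraMap_iff hσ] at this
  · rintro _ ⟨w, hw, rfl⟩ _ ⟨u, hu, rfl⟩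
    rw [hτ_form, map_mem_range_algebraMap_iff hσ]
    exact hw u hu

theorem mapLat_dualLat_ne_self [IsDomain W₀] [IsPrincipalIdealRing W₀] [IsFractionRing W₀ K₀]
    (hσ : ∀ c : W₀, algebraMap W₀ K₀ (σ₀ c) = σ (algebraMap W₀ K₀ c))
    (halt : LinearMap.IsAlt form) (hnondeg : LinearMap.SeparatingLeft form)
    (hτ : Function.Surjective τ) (hτ_form : ∀ x y, form (τ x) (τ y) = σ (form x y))
    {M : Submodule W₀ N₀} (hM : IsLattice (K₀ := K₀) M) (hne : M ≠ mapLat τ M) :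
    mapLat τ (dualLat form M) ≠ dualLat form M := by
  intro h
  apply hne
  calc M = dualLat form (dualLat form M) := (dualLat_dualLat halt hnondeg hM).symm
    _ = dualLat form (mapLat τ (dualLat form M)) := by rw [h]
    _ = mapLat τ M := by rw [dualLat_mapLat hσ hτ hτ_form, dualLat_dualLat halt hnondeg hM]

-- `mapLatOrderIso τ hτ A` is definitionally `mapLat τ A`.
def mapLatOrderIso (τ : N₀ →ₛₗ[(σ₀ : W₀ →+* W₀)] N₀) (hτ : Function.Bijective τ) :
    Submodule W₀ N₀ ≃o Submodule W₀ N₀ :=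
  letI := RingHomInvPair.of_ringEquiv σ₀
  letI := RingHomInvPair.symm (σ₀ : W₀ →+* W₀) (σ₀.symm : W₀ →+* W₀)
  Submodule.orderIsoMapComap (LinearEquiv.ofBijective τ hτ)

end Frobenius

theorem statement_11_general
    (p : ℕ)
    {W₀ : Type*} [CommRing W₀] [IsDomain W₀] [IsDiscreteValuationRing W₀]
    {K₀ : Type*} [Field K₀] [Algebra W₀ K₀] [IsFractionRing W₀ K₀]
    (σ : K₀ ≃+* K₀) (σ₀ : W₀ ≃+* W₀)
    (hσ : ∀ c : W₀, algebraMap W₀ K₀ (σ₀ c) = σ (algebraMap W₀ K₀ c))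
    {N₀ : Type*} [AddCommGroup N₀] [Module K₀ N₀] [Module W₀ N₀] [IsScalarTower W₀ K₀ N₀]
    (form : N₀ →ₗ[K₀] N₀ →ₗ[K₀] K₀)
    (halt : ∀ x, form x x = 0)
    (hnondeg : ∀ x, (∀ y, form x y = 0) → x = 0)
    (τ : N₀ →ₛₗ[(σ₀ : W₀ →+* W₀)] N₀)
    (hτ_bij : Function.Bijective τ)
    (hτ_form : ∀ x y, form (τ x) (τ y) = σ (form x y))
    (M₀ : Submodule W₀ N₀) (hM₀ : IsAdmissible p form τ M₀)
    (hne : M₀ ≠ mapLat τ M₀)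
    (h_sup_stable : mapLat τ (M₀ ⊔ mapLat τ M₀) = M₀ ⊔ mapLat τ M₀)
    (T₀ : Submodule W₀ N₀)
    (hT₁ : SubIdx M₀ T₀ 1) (hT₂ : SubIdx T₀ (dualLat form M₀) 1) :
    (mapLat τ M₀ ≤ T₀ ↔ M₀ ≤ mapLat τ (dualLat form T₀)) ∧
    (M₀ ≤ mapLat τ (dualLat form T₀) ↔ T₀ = M₀ ⊔ mapLat τ M₀) := by
  obtain ⟨hlat, -, hMΛ, -, hMτΛ⟩ := hM₀
  set Λ := dualLat form M₀
  set L := M₀ ⊔ mapLat τ M₀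
  have hτΛ : mapLat τ Λ ≠ Λ :=
    mapLat_dualLat_ne_self hσ halt hnondeg hτ_bij.surjective hτ_form hlat hne
  have hLΛ : L ≤ Λ := by
    refine sup_le hMΛ.1 ((le_dualLat_comm halt).mpr ?_)
    rw [dualLat_mapLat hσ hτ_bij.surjective hτ_form]
    exact hMτΛ.1
  have hML : M₀ < L := lt_sup_apply_of_apply_sup_eq hne h_sup_stable
  have hLltΛ : L < Λ := hLΛ.lt_of_ne fun h => hτΛ (h ▸ h_sup_stable)
  obtain ⟨hML_cov, hLΛ_cov⟩ := hMΛ.covBy_and_covBy_of_lt_of_lt hML hLltΛ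
  have hb_iff : M₀ ≤ mapLat τ (dualLat form T₀) ↔ mapLat τ T₀ ≤ Λ := by
    rw [← dualLat_mapLat hσ hτ_bij.surjective hτ_form, le_dualLat_comm halt]
  have hbc : mapLat τ T₀ ≤ Λ → T₀ = L := fun hb =>
    (mapLatOrderIso τ hτ_bij).eq_of_covBy_of_apply_le hT₁.covBy hML_cov hT₂.covBy hLΛ_cov
      h_sup_stable hb hτΛ
  have hcb : T₀ = L → mapLat τ T₀ ≤ Λ := fun h => by rw [h, h_sup_stable]; exact hLΛ
  have hac : mapLat τ M₀ ≤ T₀ → T₀ = L := fun ha =>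
    ((hT₁.covBy.eq_or_eq le_sup_left (sup_le hT₁.1 ha)).resolve_left hML.ne').symm
  have hca : T₀ = L → mapLat τ M₀ ≤ T₀ := fun h => h ▸ le_sup_right
  rw [hb_iff]
  exact ⟨⟨hcb ∘ hac, hca ∘ hbc⟩, ⟨hbc, hcb⟩⟩

/-- Let `M₀` be admissible with `M₀ ≠ τ(M₀)` and both `M₀ + τ(M₀)`
and `M₀ ∩ τ(M₀)` τ-stable.  For a lattice `T₀` with `M₀ ⊂¹ T₀ ⊂¹ M₀^∨` the following
are equivalent: (a) `τ(M₀) ⊆ T₀`; (b) `M₀ ⊆ τ(T₀^∨)`; (c) `T₀ = M₀ + τ(M₀)`. -/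
theorem statement_11
    (p : ℕ) (hp : Nat.Prime p) (hp_odd : p ≠ 2)
    {W₀ : Type*} [CommRing W₀] [IsDomain W₀] [IsDiscreteValuationRing W₀]
    {K₀ : Type*} [Field K₀] [Algebra W₀ K₀] [IsFractionRing W₀ K₀]
    (hp_irr : Irreducible (p : W₀))
    (σ : K₀ ≃+* K₀) (σ₀ : W₀ ≃+* W₀)
    (hσ : ∀ c : W₀, algebraMap W₀ K₀ (σ₀ c) = σ (algebraMap W₀ K₀ c))
    {N₀ : Type*} [AddCommGroup N₀] [Module K₀ N₀] [Module W₀ N₀] [IsScalarTower W₀ K₀ N₀]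
    (hdim : Module.finrank K₀ N₀ = 4)
    (form : N₀ →ₗ[K₀] N₀ →ₗ[K₀] K₀)
    (halt : ∀ x, form x x = 0)
    (hnondeg : ∀ x, (∀ y, form x y = 0) → x = 0)
    (τ : N₀ →ₛₗ[(σ₀ : W₀ →+* W₀)] N₀)
    (hτ_bij : Function.Bijective τ)
    (hτ_semilinear : ∀ (a : K₀) (x : N₀), τ (a • x) = σ a • τ x)
    (hτ_form : ∀ x y, form (τ x) (τ y) = σ (form x y))
    (M₀ : Submodule W₀ N₀) (hM₀ : IsAdmissible p form τ M₀)
    (hne : M₀ ≠ mapLat τ M₀)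
    (h_sup_stable : mapLat τ (M₀ ⊔ mapLat τ M₀) = M₀ ⊔ mapLat τ M₀)
    (h_inf_stable : mapLat τ (M₀ ⊓ mapLat τ M₀) = M₀ ⊓ mapLat τ M₀)
    (T₀ : Submodule W₀ N₀)
    (hT₁ : SubIdx M₀ T₀ 1) (hT₂ : SubIdx T₀ (dualLat form M₀) 1) :
    (mapLat τ M₀ ≤ T₀ ↔ M₀ ≤ mapLat τ (dualLat form T₀)) ∧
    (M₀ ≤ mapLat τ (dualLat form T₀) ↔ T₀ = M₀ ⊔ mapLat τ M₀) :=
  statement_11_general p σ σ₀ hσ form halt hnondeg τ hτ_bij hτ_form M₀ hM₀ hne h_sup_stable T₀ hT₁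
    hT₂

end QURZ
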